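/- Let γ_M : ℝ² → ℝ⁵ be given by γ_M(t₁,t₂) = (t₁, t₂, t₁², 2t₁t₂, t₂²), and for f : ℝ⁵ → ℝ define R f(x) = ∫_{[-1,1]²} f(x + γ_M(t)) dt. If p, q ∈ [1,∞] satisfy q > p and (1/p, 1/q) lies outside the closed triangle given by the convex hull of the points (0,0), (1,1), and (5/8, 3/8), then there is no finite constant C such that ‖R f‖_{L^q(ℝ⁵)} ≤ C ‖f‖_{L^p(ℝ⁵)} holds for all nonnegative f ∈ L^p(ℝ⁵). -/

import Mathlib

/-!
Two Knapp-type examples, writing `γ_M(t) = (t, Q t)` in `ℝ² × ℝ³`. The indicator of the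
neighbourhood `{|y'| ≤ 2, |y'' - Q y'| ≤ 7δ}` of the surface has volume `≍ δ³`, and its average is
`≥ 4` on the `δ`-cube, of volume `≍ δ⁵`; an `L^p → L^q` bound then forces `5/q ≥ 3/p`. Dually, the
average of the indicator of the `δ`-cube is `≳ δ²` on `{|x'| ≤ 1/2, |x'' + Q x'| ≤ δ/4}`, a
neighbourhood of the reflected surface `-γ_M` of volume `≍ δ³`, because there `x + γ_M(t)` stays in
the cube for `t` in a ball of radius `δ/4`; this forces `5/p - 3/q ≤ 2`. Both volumes come from the
measure-preserving shear `(u, v) ↦ (u, v - g u)`. Letting `δ → 0`, and using `1/q ≤ 1/p`, the point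
`(1/p, 1/q)` lies in the triangle cut out by these three inequalities.
-/

open MeasureTheory Set
open scoped ENNReal NNReal

noncomputable def gammaM (t : Fin 2 → ℝ) : Fin 5 → ℝ :=
  ![t 0, t 1, (t 0) ^ 2, 2 * t 0 * t 1, (t 1) ^ 2]

open Metric Filter Topology

lemma measureReal_le_setIntegral_indicator_comp {α β : Type*} [MeasurableSpace α]
    [MeasurableSpace β] {μ : Measure α} {U V : Set α} {S : Set β} {F : α → β}
    (hF : Measurable F) (hS : MeasurableSet S) (hV : μ V ≠ ∞) (hUV : U ⊆ V)
    (hUS : MapsTo F U S) :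
    μ.real U ≤ ∫ t in V, S.indicator 1 (F t) ∂μ := by
  have hpre : MeasurableSet (F ⁻¹' S) := hF hS
  calc μ.real U ≤ μ.real (F ⁻¹' S ∩ V) :=
        measureReal_mono (subset_inter hUS hUV) (measure_inter_lt_top_of_right_ne_top hV).ne
    _ = ∫ t in V, (F ⁻¹' S).indicator 1 t ∂μ := by
        rw [integral_indicator_one hpre, measureReal_restrict_apply hpre]
    _ = ∫ t in V, S.indicator 1 (F t) ∂μ := by
        simp_rw [← indicator_comp_right, Pi.one_comp]

lemma mul_measureReal_rpow_le_of_indicator {α : Type*} [MeasurableSpace α] {μ : Measure α}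
    {p q : ℝ≥0∞} (hq : q ≠ 0) {A : (α → ℝ) → α → ℝ} {C : ℝ≥0}
    (hA : ∀ f : α → ℝ, MemLp f p μ → (∀ x, 0 ≤ f x) → eLpNorm (A f) q μ ≤ C * eLpNorm f p μ)
    {S T : Set α} (hS : MeasurableSet S) (hSfin : μ S ≠ ∞) (hT : MeasurableSet T)
    (hT0 : μ T ≠ 0) {m : ℝ} (hm : 0 ≤ m) (hAT : ∀ x ∈ T, m ≤ A (S.indicator 1) x) :
    m * μ.real T ^ q⁻¹.toReal ≤ C * μ.real S ^ p⁻¹.toReal := by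
  have hmono : eLpNorm (T.indicator fun _ => m) q μ ≤ eLpNorm (A (S.indicator 1)) q μ := by
    refine eLpNorm_mono fun x => ?_
    by_cases hx : x ∈ T
    · rw [indicator_of_mem hx, Real.norm_of_nonneg hm]
      exact (hAT x hx).trans (Real.le_norm_self _)
    · simp [hx]
  have key : ENNReal.ofReal m * μ T ^ q⁻¹.toReal ≤ C * μ S ^ p⁻¹.toReal :=
    calc ENNReal.ofReal m * μ T ^ q⁻¹.toReal
        = eLpNorm (T.indicator fun _ => m) q μ := by
          rw [eLpNorm_indicator_const' hT hT0 hq, Real.enorm_eq_ofReal hm, one_div,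
            ENNReal.toReal_inv]
      _ ≤ eLpNorm (A (S.indicator 1)) q μ := hmono
      _ ≤ C * eLpNorm (S.indicator fun _ => (1 : ℝ)) p μ :=
          hA _ (memLp_indicator_const p hS 1 (Or.inr hSfin))
            (fun _ => indicator_nonneg (fun _ _ => zero_le_one) _)
      _ ≤ C * μ S ^ p⁻¹.toReal := by
          grw [eLpNorm_indicator_const_le]
          rw [enorm_one, one_mul, one_div, ENNReal.toReal_inv]
  have hfin : (C : ℝ≥0∞) * μ S ^ p⁻¹.toReal ≠ ∞ :=
    ENNReal.mul_ne_top ENNReal.coe_ne_top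
      (ENNReal.rpow_ne_top_of_nonneg ENNReal.toReal_nonneg hSfin)
  have := ENNReal.toReal_mono hfin key
  rwa [ENNReal.toReal_mul, ENNReal.toReal_mul, ← ENNReal.toReal_rpow, ← ENNReal.toReal_rpow,
    ENNReal.toReal_ofReal hm, ENNReal.coe_toReal] at this

lemma false_of_forall_rpow_le {c₁ c₂ e₁ e₂ : ℝ} (hc₁ : 0 < c₁) (he : e₁ < e₂)
    (h : ∀ δ ∈ Ioc (0 : ℝ) 1, c₁ * δ ^ e₁ ≤ c₂ * δ ^ e₂) : False := by
  have hlim : Tendsto (fun δ : ℝ => c₂ * δ ^ (e₂ - e₁)) (𝓝[>] 0) (𝓝 0) := by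
    have := ((Real.continuousAt_rpow_const 0 (e₂ - e₁) (Or.inr (sub_nonneg.2 he.le))).const_mul
      c₂).tendsto.mono_left (nhdsWithin_le_nhds (s := Ioi 0))
    rwa [Real.zero_rpow (sub_pos.2 he).ne', mul_zero] at this
  have hle : ∀ᶠ δ in 𝓝[>] (0 : ℝ), c₁ ≤ c₂ * δ ^ (e₂ - e₁) := by
    filter_upwards [Ioc_mem_nhdsGT zero_lt_one] with δ hδ
    rw [← mul_le_mul_iff_left₀ (Real.rpow_pos_of_pos hδ.1 e₁), mul_assoc,
      ← Real.rpow_add hδ.1, sub_add_cancel]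
    exact h δ hδ
  exact hc₁.not_ge (ge_of_tendsto hlim hle)

lemma rpow_mul_pow_eq {c δ : ℝ} (hc : 0 ≤ c) (hδ : 0 ≤ δ) (k : ℕ) (r : ℝ) :
    (c * δ ^ k) ^ r = c ^ r * δ ^ (k * r) := by
  rw [Real.mul_rpow hc (by positivity), ← Real.rpow_natCast, ← Real.rpow_mul hδ]

lemma measurePreserving_shear {α β : Type*} [MeasurableSpace α] [MeasurableSpace β] [AddGroup β]
    [MeasurableSub₂ β] {μ : Measure α} {ν : Measure β} [SFinite μ] [SFinite ν]
    [ν.IsAddRightInvariant] {g : α → β} (hg : Measurable g) :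
    MeasurePreserving (fun z : α × β => (z.1, z.2 - g z.1)) (μ.prod ν) (μ.prod ν) :=
  (MeasurePreserving.id μ).skew_product (measurable_snd.sub (hg.comp measurable_fst))
    (ae_of_all _ fun _ => map_sub_right_eq_self ν _)

lemma abs_mul_le_norm_mul_norm {ι : Type*} [Fintype ι] (u v : ι → ℝ) (i j : ι) :
    |u i * v j| ≤ ‖u‖ * ‖v‖ := by
  rw [abs_mul]
  exact mul_le_mul (norm_le_pi_norm u i) (norm_le_pi_norm v j) (abs_nonneg _) (norm_nonneg _)

lemma mem_Icc_neg_one_one_iff {ι : Type*} [Fintype ι] {t : ι → ℝ} :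
    t ∈ Icc (-1) 1 ↔ ‖t‖ ≤ 1 := by
  simp [Pi.le_def, pi_norm_le_iff_of_nonneg, abs_le, forall_and]

lemma measureReal_Icc_neg_one_one : volume.real (Icc (-1 : Fin 2 → ℝ) 1) = 4 := by
  rw [measureReal_def, Real.volume_Icc_pi_toReal (fun _ => by norm_num)]
  norm_num

noncomputable def splitEquiv (m n : ℕ) :
    (Fin (m + n) → ℝ) ≃ᵐ (Fin m → ℝ) × (Fin n → ℝ) :=
  (MeasurableEquiv.piCongrLeft (fun _ => ℝ) finSumFinEquiv).symm.trans
    (MeasurableEquiv.sumPiEquivProdPi fun _ => ℝ)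

lemma measurePreserving_splitEquiv (m n : ℕ) :
    MeasurePreserving (splitEquiv m n) volume volume :=
  (volume_measurePreserving_piCongrLeft (fun _ => ℝ) finSumFinEquiv).symm.trans
    (volume_measurePreserving_sumPiEquivProdPi fun _ => ℝ)

lemma splitEquiv_add (m n : ℕ) (x y : Fin (m + n) → ℝ) :
    splitEquiv m n (x + y) = splitEquiv m n x + splitEquiv m n y := rfl

lemma norm_splitEquiv (m n : ℕ) (x : Fin (m + n) → ℝ) : ‖splitEquiv m n x‖ = ‖x‖ := by
  refine le_antisymm (norm_prod_le_iff.2 ⟨?_, ?_⟩)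
    ((pi_norm_le_iff_of_nonneg (norm_nonneg _)).2 fun i => Fin.addCases
      (fun i => (norm_le_pi_norm (splitEquiv m n x).1 i).trans (norm_fst_le _))
      (fun j => (norm_le_pi_norm (splitEquiv m n x).2 j).trans (norm_snd_le _)) i)
  · exact (pi_norm_le_iff_of_nonneg (norm_nonneg x)).2 fun i => norm_le_pi_norm x _
  · exact (pi_norm_le_iff_of_nonneg (norm_nonneg x)).2 fun j => norm_le_pi_norm x _

noncomputable def quadM (u : Fin 2 → ℝ) : Fin 3 → ℝ := ![u 0 ^ 2, 2 * u 0 * u 1, u 1 ^ 2]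

lemma measurable_quadM : Measurable quadM := by
  unfold quadM; fun_prop

lemma quadM_neg (u : Fin 2 → ℝ) : quadM (-u) = quadM u := by
  ext i; fin_cases i <;> simp [quadM]

lemma norm_quadM_le (u : Fin 2 → ℝ) : ‖quadM u‖ ≤ 2 * ‖u‖ ^ 2 := by
  have h i j := abs_le.1 (abs_mul_le_norm_mul_norm u u i j)
  have := mul_self_nonneg ‖u‖
  refine (pi_norm_le_iff_of_nonneg (by positivity)).2 fun i => abs_le.2 ?_
  fin_cases i <;> simp only [quadM] <;> constructor <;> simp <;>
    linarith [h 0 0, h 0 1, h 1 1]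

lemma norm_quadM_add_sub_le (u v : Fin 2 → ℝ) :
    ‖quadM (u + v) - quadM u - quadM v‖ ≤ 4 * ‖u‖ * ‖v‖ := by
  have h i j := abs_le.1 (abs_mul_le_norm_mul_norm u v i j)
  have := mul_nonneg (norm_nonneg u) (norm_nonneg v)
  refine (pi_norm_le_iff_of_nonneg (by positivity)).2 fun i => abs_le.2 ?_
  fin_cases i <;> simp only [quadM] <;> constructor <;> simp <;>
    linarith [h 0 0, h 0 1, h 1 0, h 1 1]

lemma measurable_gammaM : Measurable gammaM := by
  unfold gammaM; fun_prop

lemma splitEquiv_gammaM (t : Fin 2 → ℝ) : splitEquiv 2 3 (gammaM t) = (t, quadM t) := by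
  ext i <;> fin_cases i <;> rfl

lemma norm_add_quadM_sub_quadM_le {z : (Fin 2 → ℝ) × (Fin 3 → ℝ)} {t : Fin 2 → ℝ} {δ : ℝ}
    (hδ : δ ≤ 1) (hz : ‖z‖ ≤ δ) (ht : ‖t‖ ≤ 1) :
    ‖z.1 + t‖ ≤ 2 ∧ ‖z.2 + quadM t - quadM (z.1 + t)‖ ≤ 7 * δ := by
  obtain ⟨hz₁, hz₂⟩ := norm_prod_le_iff.1 hz
  have hQ := norm_quadM_le z.1
  have hB := norm_quadM_add_sub_le z.1 t
  have hz₁t := mul_le_mul hz₁ ht (norm_nonneg t) ((norm_nonneg _).trans hz₁)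
  have hz₁z₁ := mul_le_mul hz₁ hz₁ (norm_nonneg _) ((norm_nonneg _).trans hz₁)
  refine ⟨(norm_add_le _ _).trans (by linarith), ?_⟩
  calc ‖z.2 + quadM t - quadM (z.1 + t)‖
      = ‖z.2 - quadM z.1 - (quadM (z.1 + t) - quadM z.1 - quadM t)‖ := by congr 1; abel
    _ ≤ ‖z.2‖ + ‖quadM z.1‖ + ‖quadM (z.1 + t) - quadM z.1 - quadM t‖ :=
        norm_sub_le_of_le (norm_sub_le _ _) le_rfl
    _ ≤ 7 * δ := by nlinarith [norm_nonneg z.1]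

lemma norm_add_quadM_le {z : (Fin 2 → ℝ) × (Fin 3 → ℝ)} {t : Fin 2 → ℝ} {δ : ℝ}
    (hδ : δ ≤ 1) (hz₁ : ‖z.1‖ ≤ 1 / 2) (hz₂ : ‖z.2 + quadM z.1‖ ≤ δ / 4)
    (ht : ‖t + z.1‖ ≤ δ / 4) :
    ‖z + (t, quadM t)‖ ≤ δ := by
  have hδ0 : 0 ≤ δ := by linarith [(norm_nonneg _).trans ht]
  refine norm_prod_le_iff.2 ⟨?_, ?_⟩
  · rw [Prod.fst_add, add_comm]
    linarith
  have hQ := norm_quadM_le (t + z.1)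
  have hB := norm_quadM_add_sub_le (t + z.1) (-z.1)
  rw [norm_neg] at hB
  have hst := mul_le_mul ht hz₁ (norm_nonneg _) (by positivity)
  have hss := mul_le_mul ht ht (norm_nonneg _) (by positivity)
  calc ‖(z + (t, quadM t)).2‖
      = ‖(z.2 + quadM z.1) + quadM (t + z.1)
          + (quadM (t + z.1 + -z.1) - quadM (t + z.1) - quadM (-z.1))‖ := by
        rw [add_neg_cancel_right, quadM_neg, Prod.snd_add]; congr 1; abel
    _ ≤ ‖z.2 + quadM z.1‖ + ‖quadM (t + z.1)‖
          + ‖quadM (t + z.1 + -z.1) - quadM (t + z.1) - quadM (-z.1)‖ := norm_add₃_le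
    _ ≤ δ := by nlinarith [norm_nonneg z.1]

-- Norms on `Fin n → ℝ` are sup norms, so these balls are cubes.
noncomputable def shearBox (g : (Fin 2 → ℝ) → Fin 3 → ℝ) (r s : ℝ) : Set (Fin 5 → ℝ) :=
  splitEquiv 2 3 ⁻¹' ((fun z => (z.1, z.2 - g z.1)) ⁻¹' (closedBall 0 r ×ˢ closedBall 0 s))

lemma mem_shearBox {g : (Fin 2 → ℝ) → Fin 3 → ℝ} {r s : ℝ} {x : Fin 5 → ℝ} :
    x ∈ shearBox g r s ↔
      ‖(splitEquiv 2 3 x).1‖ ≤ r ∧ ‖(splitEquiv 2 3 x).2 - g (splitEquiv 2 3 x).1‖ ≤ s := by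
  simp [shearBox]

lemma measurableSet_shearBox {g : (Fin 2 → ℝ) → Fin 3 → ℝ} (hg : Measurable g) (r s : ℝ) :
    MeasurableSet (shearBox g r s) :=
  (splitEquiv 2 3).measurable ((measurable_fst.prodMk (measurable_snd.sub (hg.comp
    measurable_fst))) (measurableSet_closedBall.prod measurableSet_closedBall))

lemma volume_shearBox {g : (Fin 2 → ℝ) → Fin 3 → ℝ} (hg : Measurable g) {r s : ℝ}
    (hr : 0 ≤ r) (hs : 0 ≤ s) :
    volume (shearBox g r s) = ENNReal.ofReal ((2 * r) ^ 2 * (2 * s) ^ 3) := by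
  have hW : MeasurableSet (closedBall (0 : Fin 2 → ℝ) r ×ˢ closedBall (0 : Fin 3 → ℝ) s) :=
    measurableSet_closedBall.prod measurableSet_closedBall
  have hshear := measurePreserving_shear (μ := volume) (ν := volume) hg
  rw [shearBox, (measurePreserving_splitEquiv 2 3).measure_preimage
    (hshear.measurable hW).nullMeasurableSet, Measure.volume_eq_prod,
    hshear.measure_preimage hW.nullMeasurableSet, Measure.prod_prod,
    Real.volume_pi_closedBall _ hr, Real.volume_pi_closedBall _ hs, Fintype.card_fin,
    Fintype.card_fin, ← ENNReal.ofReal_mul (by positivity)]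

noncomputable def surfaceAverage (f : (Fin 5 → ℝ) → ℝ) (x : Fin 5 → ℝ) : ℝ :=
  ∫ t in Icc (-1 : Fin 2 → ℝ) 1, f (x + gammaM t)

lemma four_le_surfaceAverage_indicator_shearBox {δ : ℝ} (hδ : δ ≤ 1) {x : Fin 5 → ℝ}
    (hx : ‖x‖ ≤ δ) : 4 ≤ surfaceAverage ((shearBox quadM 2 (7 * δ)).indicator 1) x := by
  rw [← measureReal_Icc_neg_one_one]
  refine measureReal_le_setIntegral_indicator_comp (measurable_const.add measurable_gammaM)
    (measurableSet_shearBox measurable_quadM _ _) measure_Icc_lt_top.ne subset_rfl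
    fun t ht => ?_
  rw [mem_shearBox, splitEquiv_add, splitEquiv_gammaM]
  exact norm_add_quadM_sub_quadM_le hδ (by rwa [norm_splitEquiv])
    (mem_Icc_neg_one_one_iff.1 ht)

lemma sq_le_surfaceAverage_indicator_closedBall {δ : ℝ} (hδ0 : 0 ≤ δ) (hδ : δ ≤ 1)
    {x : Fin 5 → ℝ} (hx : x ∈ shearBox (-quadM) (1 / 2) (δ / 4)) :
    (δ / 2) ^ 2 ≤ surfaceAverage ((closedBall 0 δ).indicator 1) x := by
  rw [mem_shearBox, Pi.neg_apply, sub_neg_eq_add] at hx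
  set z := splitEquiv 2 3 x
  have hU : volume.real (closedBall (-z.1) (δ / 4)) = (δ / 2) ^ 2 := by
    rw [measureReal_def, Real.volume_pi_closedBall _ (by positivity), Fintype.card_fin,
      ENNReal.toReal_ofReal (by positivity)]
    ring
  rw [← hU]
  refine measureReal_le_setIntegral_indicator_comp (measurable_const.add measurable_gammaM)
    measurableSet_closedBall measure_Icc_lt_top.ne (fun t ht => ?_) fun t ht => ?_
  all_goals rw [mem_closedBall_iff_norm, sub_neg_eq_add] at ht
  · refine mem_Icc_neg_one_one_iff.2 ?_
    calc ‖t‖ = ‖(t + z.1) - z.1‖ := by rw [add_sub_cancel_right]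
      _ ≤ ‖t + z.1‖ + ‖z.1‖ := norm_sub_le _ _
      _ ≤ 1 := by linarith
  · rw [mem_closedBall_zero_iff, ← norm_splitEquiv 2 3, splitEquiv_add, splitEquiv_gammaM]
    exact norm_add_quadM_le hδ hx.1 hx.2 ht

lemma not_bounded_of_five_mul_lt_three_mul {p q : ℝ≥0∞} (hq : q ≠ 0)
    (hpq : 5 * q⁻¹.toReal < 3 * p⁻¹.toReal) (C : ℝ≥0) :
    ¬ ∀ f : (Fin 5 → ℝ) → ℝ, MemLp f p volume → (∀ x, 0 ≤ f x) →
      eLpNorm (surfaceAverage f) q volume ≤ C * eLpNorm f p volume := by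
  intro hC
  refine false_of_forall_rpow_le (c₁ := 4 * 32 ^ q⁻¹.toReal)
    (c₂ := C * 43904 ^ p⁻¹.toReal) (by positivity) hpq fun δ hδ => ?_
  have hδ0 := hδ.1.le
  have hvol := volume_shearBox measurable_quadM zero_le_two (by positivity : 0 ≤ 7 * δ)
  have key := mul_measureReal_rpow_le_of_indicator hq hC
    (measurableSet_shearBox measurable_quadM 2 (7 * δ)) (hvol ▸ ENNReal.ofReal_ne_top)
    measurableSet_closedBall (measure_closedBall_pos _ _ hδ.1).ne' zero_le_four
    fun x hx => four_le_surfaceAverage_indicator_shearBox hδ.2 (mem_closedBall_zero_iff.1 hx)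
  rw [measureReal_def, measureReal_def, hvol, Real.volume_pi_closedBall _ hδ0, Fintype.card_fin,
    ENNReal.toReal_ofReal (by positivity), ENNReal.toReal_ofReal (by positivity)] at key
  calc 4 * 32 ^ q⁻¹.toReal * δ ^ (5 * q⁻¹.toReal) = 4 * (32 * δ ^ 5) ^ q⁻¹.toReal := by
        rw [rpow_mul_pow_eq (by norm_num) hδ0, Nat.cast_ofNat]; ring
    _ ≤ C * ((2 * 2) ^ 2 * (2 * (7 * δ)) ^ 3) ^ p⁻¹.toReal := by convert key using 3; ring
    _ = C * 43904 ^ p⁻¹.toReal * δ ^ (3 * p⁻¹.toReal) := by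
        rw [show (2 * 2 : ℝ) ^ 2 * (2 * (7 * δ)) ^ 3 = 43904 * δ ^ 3 by ring,
          rpow_mul_pow_eq (by norm_num) hδ0, Nat.cast_ofNat]
        ring

lemma not_bounded_of_two_add_three_mul_lt {p q : ℝ≥0∞} (hq : q ≠ 0)
    (hpq : 2 + 3 * q⁻¹.toReal < 5 * p⁻¹.toReal) (C : ℝ≥0) :
    ¬ ∀ f : (Fin 5 → ℝ) → ℝ, MemLp f p volume → (∀ x, 0 ≤ f x) →
      eLpNorm (surfaceAverage f) q volume ≤ C * eLpNorm f p volume := by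
  intro hC
  refine false_of_forall_rpow_le (c₁ := 1 / 4 * (1 / 8) ^ q⁻¹.toReal)
    (c₂ := C * 32 ^ p⁻¹.toReal) (by positivity) hpq fun δ hδ => ?_
  obtain ⟨hδpos, hδ1⟩ := hδ
  have hδ0 := hδpos.le
  have hvol := volume_shearBox (measurable_quadM.neg) (by norm_num : (0 : ℝ) ≤ 1 / 2)
    (by positivity : 0 ≤ δ / 4)
  have key := mul_measureReal_rpow_le_of_indicator hq hC measurableSet_closedBall
    (measure_closedBall_lt_top (x := (0 : Fin 5 → ℝ))).ne
    (measurableSet_shearBox measurable_quadM.neg _ _)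
    (hvol ▸ (ENNReal.ofReal_pos.2 (by positivity)).ne') (by positivity)
    fun x hx => sq_le_surfaceAverage_indicator_closedBall hδ0 hδ1 hx
  rw [measureReal_def, measureReal_def, hvol, Real.volume_pi_closedBall _ hδ0, Fintype.card_fin,
    ENNReal.toReal_ofReal (by positivity), ENNReal.toReal_ofReal (by positivity)] at key
  calc 1 / 4 * (1 / 8) ^ q⁻¹.toReal * δ ^ (2 + 3 * q⁻¹.toReal)
        = (δ / 2) ^ 2 * (1 / 8 * δ ^ 3) ^ q⁻¹.toReal := by
        rw [rpow_mul_pow_eq (by norm_num) hδ0, Real.rpow_add hδpos, Real.rpow_two,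
          Nat.cast_ofNat]
        ring
    _ ≤ C * ((2 * δ) ^ 5) ^ p⁻¹.toReal := by convert key using 3; ring
    _ = C * 32 ^ p⁻¹.toReal * δ ^ (5 * p⁻¹.toReal) := by
        rw [show (2 * δ) ^ 5 = 32 * δ ^ 5 by ring, rpow_mul_pow_eq (by norm_num) hδ0,
          Nat.cast_ofNat]
        ring

lemma mem_triangle_of_le {x y : ℝ} (hyx : y ≤ x) (h₁ : 3 * x ≤ 5 * y)
    (h₂ : 5 * x - 3 * y ≤ 2) :
    (x, y) ∈ convexHull ℝ {((0 : ℝ), (0 : ℝ)), (1, 1), (5/8, 3/8)} := by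
  set T : Set (ℝ × ℝ) := {((0 : ℝ), (0 : ℝ)), (1, 1), (5/8, 3/8)}
  -- the weights are the barycentric coordinates of `(x, y)`
  have := (convex_convexHull ℝ T).sum_mem (t := Finset.univ)
    (w := ![(2 - 5 * x + 3 * y) / 2, (5 * y - 3 * x) / 2, 4 * (x - y)])
    (z := ![((0 : ℝ), (0 : ℝ)), (1, 1), (5/8, 3/8)])
    (fun i _ => by fin_cases i <;> simp <;> linarith) (by simp [Fin.sum_univ_three]; ring)
    (fun i _ => subset_convexHull ℝ T (by fin_cases i <;> simp [T]))
  convert this using 1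
  simp [Fin.sum_univ_three, Prod.ext_iff]
  constructor <;> ring

theorem statement1 (p q : ℝ≥0∞) (hp : 1 ≤ p) (hpq : p < q)
    (h : (p⁻¹.toReal, q⁻¹.toReal) ∉
      convexHull ℝ {((0 : ℝ), (0 : ℝ)), (1, 1), (5/8, 3/8)}) :
    ¬ ∃ C : ℝ≥0, ∀ f : (Fin 5 → ℝ) → ℝ, MemLp f p volume → (∀ x, 0 ≤ f x) →
      eLpNorm (fun x => ∫ t in Icc (-1 : Fin 2 → ℝ) 1, f (x + gammaM t)) q volume
        ≤ C * eLpNorm f p volume := by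
  rintro ⟨C, hC⟩
  have hq : q ≠ 0 := (pos_of_gt hpq).ne'
  have hqp : q⁻¹.toReal ≤ p⁻¹.toReal :=
    ENNReal.toReal_mono (ENNReal.inv_ne_top.2 (zero_lt_one.trans_le hp).ne')
      (ENNReal.inv_le_inv.2 hpq.le)
  by_cases h₁ : 5 * q⁻¹.toReal < 3 * p⁻¹.toReal
  · exact not_bounded_of_five_mul_lt_three_mul hq h₁ C hC
  by_cases h₂ : 2 + 3 * q⁻¹.toReal < 5 * p⁻¹.toReal
  · exact not_bounded_of_two_add_three_mul_lt hq h₂ C hC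
  exact h (mem_triangle_of_le hqp (not_lt.1 h₁) (by linarith [not_lt.1 h₂]))
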